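/- arXiv:1910.11098 — 8 statements merged into one kernel-verified Lean document; each statement's English description precedes it below -/
import Mathlib

section
/- If a^2 + 108 ≠ 0 in a field K of odd characteristic, then the polynomial X^6 - aX^5 - 33X^4 + 2aX^3 - 33X^2 - aX + 1 has no multiple roots in an algebraic closure of K. -/
/-!
The sextic `f` is palindromic, so for `z ≠ 0` it factors as `f(z) = z³ g(z + z⁻¹)` with
`g(t) = t³ - a t² - 36 t + 4a`, and differentiating gives
`f'(z) = 3z² g(t) + (z³ - z) g'(t)` for `t = z + z⁻¹`. Hence at a double root `z` of `f`
(necessarily `z ≠ 0`, as `f(0) = 1`) either `z² = 1`, so that `t² = 4`, where `g(t) = -32 t ≠ 0`;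
or `t` is a double root of `g`. The latter is impossible: eliminating between `g` and `g'` gives
`2 (a² + 108) t = 0`, so `t = 0`, then `g(0) = 4a` forces `a = 0` and `g'(0) = -36 = 0`
forces `108 = 0`.
-/

open Polynomial

noncomputable section

section CommRing

variable {R : Type*} [CommRing R]

def sextic (a : R) : R[X] :=
  X ^ 6 - C a * X ^ 5 - 33 * X ^ 4 + 2 * C a * X ^ 3 - 33 * X ^ 2 - C a * X + 1

def traceCubic (a : R) : R[X] := X ^ 3 - C a * X ^ 2 - 36 * X + 4 * C a

theorem map_sextic {S : Type*} [CommRing S] (φ : R →+* S) (a : R) :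
    (sextic a).map φ = sextic (φ a) := by
  simp [sextic]

theorem eval_sextic (a z : R) :
    (sextic a).eval z =
      z ^ 6 - a * z ^ 5 - 33 * z ^ 4 + 2 * a * z ^ 3 - 33 * z ^ 2 - a * z + 1 := by
  simp [sextic]

theorem eval_derivative_sextic (a z : R) :
    (derivative (sextic a)).eval z =
      6 * z ^ 5 - 5 * a * z ^ 4 - 132 * z ^ 3 + 6 * a * z ^ 2 - 66 * z - a := by
  simp only [sextic, derivative_add, derivative_sub, derivative_mul, derivative_X_pow,
    derivative_C, derivative_X, derivative_ofNat, derivative_one, eval_add, eval_sub, eval_mul,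
    eval_pow, eval_C, eval_X, eval_ofNat, eval_one, eval_zero]
  ring

theorem eval_traceCubic (a t : R) :
    (traceCubic a).eval t = t ^ 3 - a * t ^ 2 - 36 * t + 4 * a := by
  simp [traceCubic]

theorem eval_derivative_traceCubic (a t : R) :
    (derivative (traceCubic a)).eval t = 3 * t ^ 2 - 2 * a * t - 36 := by
  simp only [traceCubic, derivative_add, derivative_sub, derivative_mul, derivative_X_pow,
    derivative_C, derivative_X, derivative_ofNat, eval_add, eval_sub, eval_mul, eval_pow, eval_C,
    eval_X, eval_ofNat, eval_one, eval_zero]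
  ring

end CommRing

section Field

variable {L : Type*} [Field L] {a : L}

theorem eval_sextic_eq_mul_eval_traceCubic {z : L} (hz : z ≠ 0) :
    (sextic a).eval z = z ^ 3 * (traceCubic a).eval (z + z⁻¹) := by
  rw [eval_sextic, eval_traceCubic]
  field_simp
  ring

theorem eval_derivative_sextic_eq {z : L} (hz : z ≠ 0) :
    (derivative (sextic a)).eval z = 3 * z ^ 2 * (traceCubic a).eval (z + z⁻¹)
      + (z ^ 3 - z) * (derivative (traceCubic a)).eval (z + z⁻¹) := by
  rw [eval_derivative_sextic, eval_traceCubic, eval_derivative_traceCubic]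
  field_simp
  ring

theorem traceCubic_not_isRoot_derivative (h2 : (2 : L) ≠ 0) (ha : a ^ 2 + 108 ≠ 0) {t : L}
    (hg : (traceCubic a).IsRoot t) : ¬ (derivative (traceCubic a)).IsRoot t := by
  intro hg'
  rw [IsRoot, eval_traceCubic] at hg
  rw [IsRoot, eval_derivative_traceCubic] at hg'
  have ht : t = 0 := by
    have : 2 * (a ^ 2 + 108) * t = 0 := by linear_combination (3 * t - a) * hg' - 9 * hg
    simpa [h2, ha] using this
  subst ht
  have ha0 : a = 0 := by
    have : 2 * 2 * a = 0 := by linear_combination hg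
    simpa [h2] using this
  subst ha0
  exact ha (by linear_combination -3 * hg')

theorem traceCubic_not_isRoot_of_sq_eq_four (h2 : (2 : L) ≠ 0) {t : L} (ht : t ^ 2 = 4) :
    ¬ (traceCubic a).IsRoot t := by
  intro hg
  rw [IsRoot, eval_traceCubic] at hg
  have ht0 : t = 0 := by
    have : 2 ^ 5 * t = 0 := by linear_combination (t - a) * ht - hg
    simpa [h2] using this
  subst ht0
  exact pow_ne_zero 2 h2 (by linear_combination -ht)

theorem sextic_not_isRoot_derivative (h2 : (2 : L) ≠ 0) (ha : a ^ 2 + 108 ≠ 0) {z : L}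
    (hf : (sextic a).IsRoot z) : ¬ (derivative (sextic a)).IsRoot z := by
  intro hf'
  have hz : z ≠ 0 := by
    rintro rfl
    simp [IsRoot, eval_sextic] at hf
  have hg : (traceCubic a).IsRoot (z + z⁻¹) := by
    rw [IsRoot, eval_sextic_eq_mul_eval_traceCubic hz] at hf
    exact (mul_eq_zero.1 hf).resolve_left (pow_ne_zero 3 hz)
  rw [IsRoot, eval_derivative_sextic_eq hz, hg.eq_zero, mul_zero, zero_add] at hf'
  rcases mul_eq_zero.1 hf' with hz3 | hg'
  · have hz2 : z ^ 2 = 1 := by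
      have : z * (z ^ 2 - 1) = 0 := by linear_combination hz3
      linear_combination (mul_eq_zero.1 this).resolve_left hz
    refine traceCubic_not_isRoot_of_sq_eq_four h2 ?_ hg
    field_simp
    linear_combination (z ^ 2 - 1) * hz2
  · exact traceCubic_not_isRoot_derivative h2 ha hg hg'

theorem rootMultiplicity_sextic_le_one (h2 : (2 : L) ≠ 0) (ha : a ^ 2 + 108 ≠ 0) (z : L) :
    (sextic a).rootMultiplicity z ≤ 1 := by
  have hne : sextic a ≠ 0 := fun h ↦ by simpa [eval_sextic] using congr_arg (eval 0) h
  by_contra! h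
  obtain ⟨hf, hf'⟩ := (one_lt_rootMultiplicity_iff_isRoot hne).1 h
  exact sextic_not_isRoot_derivative h2 ha hf hf'

end Field

end

/-- If `a^2 + 108 ≠ 0` in a field `K` of odd characteristic, then
`X^6 - aX^5 - 33X^4 + 2aX^3 - 33X^2 - aX + 1` has no multiple roots in an algebraic
closure of `K`. -/
theorem stmt_1 (K : Type*) [Field K] (h2 : (2 : K) ≠ 0) (a : K) (ha : a ^ 2 + 108 ≠ 0)
    (f : Polynomial K)
    (hf : f = X ^ 6 - C a * X ^ 5 - 33 * X ^ 4 + 2 * C a * X ^ 3 - 33 * X ^ 2 - C a * X + 1) :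
    ∀ z : AlgebraicClosure K,
      (f.map (algebraMap K (AlgebraicClosure K))).rootMultiplicity z ≤ 1 := by
  intro z
  rw [show f = sextic a from hf, map_sextic]
  set φ := algebraMap K (AlgebraicClosure K)
  refine rootMultiplicity_sextic_le_one ?_ ?_ z
  · simpa only [map_ofNat] using (map_ne_zero φ).2 h2
  · simpa only [map_add, map_pow, map_ofNat] using (map_ne_zero φ).2 ha
end

section
/- In PGL(2,K) over a field K of odd characteristic containing i with i^2 = -1, the subgroup generated by θ₁ : x ↦ -x and θ₂ : x ↦ (x-i)/(x+i) is isomorphic to the alternating group A₄. -/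
open Matrix
open scoped MatrixGroups

/-- `PGL(2,K)`: the quotient of `GL(2,K)` by its center. -/
abbrev PGL2 (K : Type*) [Field K] :=
  GL (Fin 2) K ⧸ Subgroup.center (GL (Fin 2) K)

/-!
In `PGL(2,K)` the relations `θ₁² = θ₂³ = (θ₁θ₂)³ = 1` hold, because the corresponding matrix
powers are scalar. Since `⟨a, b | a², b³, (ab)³⟩` presents `A₄`, the group `⟨θ₁, θ₂⟩` is the
quotient of `A₄` by a normal subgroup that does not contain the double transposition mapped to
`θ₁ ≠ 1`; but every nontrivial normal subgroup of `A₄` contains all double transpositions.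

The presentation: the words `v * t^k` with `v ∈ {1, s, t s t⁻¹, t⁻¹ s t}` (the Klein four
subgroup) and `k ∈ {0, 1, -1}` are stable under left multiplication by `s` and `t`, so a group
generated by `s, t` subject to the relations has at most `12` elements, while `A₄` has `12`.
-/

open Equiv Pointwise Subgroup

section Relations
variable {G : Type*} [Group G] {g : G}

theorem inv_eq_self_of_sq_eq_one (h : g ^ 2 = 1) : g⁻¹ = g :=
  inv_eq_of_mul_eq_one_right (by rw [← sq, h])

theorem inv_eq_mul_self_of_pow_three_eq_one (h : g ^ 3 = 1) : g⁻¹ = g * g :=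
  inv_eq_of_mul_eq_one_right (by rw [← mul_assoc, ← pow_three', h])

end Relations

section Words
variable {G : Type*} [Group G] [DecidableEq G]

def a4KleinSet (s t : G) : Finset G := {1, s, t * s * t⁻¹, t⁻¹ * s * t}

def a4Words (s t : G) : Finset G := a4KleinSet s t * {1, t, t⁻¹}

theorem card_a4Words_le (s t : G) : (a4Words s t).card ≤ 12 :=
  Finset.card_mul_le.trans (Nat.mul_le_mul Finset.card_le_four Finset.card_le_three)

theorem a4Words_subset_closure (s t : G) : (a4Words s t : Set G) ⊆ closure {s, t} := by
  have hs : s ∈ closure {s, t} := subset_closure (by simp)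
  have ht : t ∈ closure {s, t} := subset_closure (by simp)
  intro x hx
  obtain ⟨n, hn, c, hc, rfl⟩ := Finset.mem_mul.mp hx
  simp only [a4KleinSet, Finset.mem_insert, Finset.mem_singleton] at hn hc
  refine mul_mem ?_ ?_
  · rcases hn with rfl | rfl | rfl | rfl
    exacts [one_mem _, hs, mul_mem (mul_mem ht hs) (inv_mem ht),
      mul_mem (mul_mem (inv_mem ht) hs) ht]
  · rcases hc with rfl | rfl | rfl
    exacts [one_mem _, ht, inv_mem ht]

variable {s t : G}

theorem mul_mem_a4KleinSet (hs : s ^ 2 = 1) (ht : t ^ 3 = 1) (hst : (s * t) ^ 3 = 1) {n : G}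
    (hn : n ∈ a4KleinSet s t) : s * n ∈ a4KleinSet s t := by
  have hs_inv := inv_eq_self_of_sq_eq_one hs
  have ht_inv := inv_eq_mul_self_of_pow_three_eq_one ht
  have hstst : s * t * s * t = t⁻¹ * s := by
    have : s * t * s * t * (s * t) = 1 := by
      rw [← hst]; simp only [pow_succ, pow_zero, one_mul, mul_assoc]
    rw [eq_inv_of_mul_eq_one_left this, _root_.mul_inv_rev, hs_inv]
  have hkey : s * (t * s * t⁻¹) = t⁻¹ * s * t :=
    calc s * (t * s * t⁻¹) = s * t * s * t * t := by rw [ht_inv]; simp only [mul_assoc]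
      _ = t⁻¹ * s * t := by rw [hstst]
  simp only [a4KleinSet, Finset.mem_insert, Finset.mem_singleton] at hn ⊢
  rcases hn with rfl | rfl | rfl | rfl
  · simp
  · simp [← sq, hs]
  · simp [hkey]
  · rw [← hkey, ← mul_assoc, ← sq, hs, one_mul]; simp

theorem conj_mem_a4KleinSet (ht : t ^ 3 = 1) {n : G} (hn : n ∈ a4KleinSet s t) :
    t * n * t⁻¹ ∈ a4KleinSet s t := by
  have ht_inv := inv_eq_mul_self_of_pow_three_eq_one ht
  simp only [a4KleinSet, Finset.mem_insert, Finset.mem_singleton] at hn ⊢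
  rcases hn with rfl | rfl | rfl | rfl
  · simp
  · simp
  · right; right; right
    calc t * (t * s * t⁻¹) * t⁻¹ = (t * t) * s * (t⁻¹ * t⁻¹) := by group
      _ = t⁻¹ * s * t := by rw [← ht_inv, ← _root_.mul_inv_rev, ← ht_inv, inv_inv]
  · simp [mul_assoc]

theorem mul_mem_a4Words (hs : s ^ 2 = 1) (ht : t ^ 3 = 1) (hst : (s * t) ^ 3 = 1) {x : G}
    (hx : x ∈ a4Words s t) : s * x ∈ a4Words s t ∧ t * x ∈ a4Words s t := by
  have ht_inv := inv_eq_mul_self_of_pow_three_eq_one ht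
  obtain ⟨n, hn, c, hc, rfl⟩ := Finset.mem_mul.mp hx
  have htc : t * c ∈ ({1, t, t⁻¹} : Finset G) := by
    simp only [Finset.mem_insert, Finset.mem_singleton] at hc ⊢
    rcases hc with rfl | rfl | rfl
    · simp
    · simp [ht_inv]
    · simp
  constructor
  · rw [← mul_assoc]; exact Finset.mul_mem_mul (mul_mem_a4KleinSet hs ht hst hn) hc
  · rw [show t * (n * c) = t * n * t⁻¹ * (t * c) by group]
    exact Finset.mul_mem_mul (conj_mem_a4KleinSet ht hn) htc

theorem closure_subset_a4Words (hs : s ^ 2 = 1) (ht : t ^ 3 = 1) (hst : (s * t) ^ 3 = 1) :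
    (closure {s, t} : Set G) ⊆ a4Words s t := by
  have hs_inv := inv_eq_self_of_sq_eq_one hs
  have ht_inv := inv_eq_mul_self_of_pow_three_eq_one ht
  intro x hx
  induction hx using closure_induction_left with
  | one =>
    rw [Finset.mem_coe, ← mul_one 1]
    exact Finset.mul_mem_mul (by simp [a4KleinSet]) (by simp)
  | mul_left x hx y _ ih =>
    rcases hx with rfl | rfl
    exacts [(mul_mem_a4Words hs ht hst ih).1, (mul_mem_a4Words hs ht hst ih).2]
  | inv_mul_cancel x hx y _ ih =>
    rcases hx with rfl | rfl
    · rw [hs_inv]; exact (mul_mem_a4Words hs ht hst ih).1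
    · rw [ht_inv, mul_assoc]
      exact (mul_mem_a4Words hs ht hst (mul_mem_a4Words hs ht hst ih).2).2

end Words

def a4Rels : Set (FreeGroup (Fin 2)) := {.of 0 ^ 2, .of 1 ^ 3, (.of 0 * .of 1) ^ 3}

section Presentation
variable {G : Type*} [Group G] {s t : G}

theorem lift_eq_one_of_mem_a4Rels (hs : s ^ 2 = 1) (ht : t ^ 3 = 1) (hst : (s * t) ^ 3 = 1) :
    ∀ r ∈ a4Rels, FreeGroup.lift ![s, t] r = 1 := by
  rintro r (rfl | rfl | rfl) <;> simpa

def a4Lift (hs : s ^ 2 = 1) (ht : t ^ 3 = 1) (hst : (s * t) ^ 3 = 1) :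
    PresentedGroup a4Rels →* G :=
  PresentedGroup.toGroup (lift_eq_one_of_mem_a4Rels hs ht hst)

theorem range_a4Lift (hs : s ^ 2 = 1) (ht : t ^ 3 = 1) (hst : (s * t) ^ 3 = 1) :
    (a4Lift hs ht hst).range = closure {s, t} := by
  rw [MonoidHom.range_eq_map, ← PresentedGroup.closure_range_of, MonoidHom.map_closure,
    ← Set.range_comp]
  convert congrArg Subgroup.closure (Matrix.range_cons_cons_empty s t ![])
  funext k
  exact PresentedGroup.toGroup.of _

theorem a4Lift_of_zero (hs : s ^ 2 = 1) (ht : t ^ 3 = 1) (hst : (s * t) ^ 3 = 1) :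
    a4Lift hs ht hst (PresentedGroup.of 0) = s :=
  PresentedGroup.toGroup.of _

end Presentation

theorem finite_and_nat_card_le_twelve_of_closure_eq_top {G : Type*} [Group G] {s t : G}
    (hs : s ^ 2 = 1) (ht : t ^ 3 = 1) (hst : (s * t) ^ 3 = 1) (htop : closure {s, t} = ⊤) :
    Finite G ∧ Nat.card G ≤ 12 := by
  classical
  have huniv : (Set.univ : Set G) ⊆ a4Words s t := by
    simpa [htop] using closure_subset_a4Words hs ht hst
  have hfin := (a4Words s t).finite_toSet.subset huniv
  refine ⟨Set.finite_univ_iff.mp hfin, ?_⟩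
  rw [← Set.ncard_univ]
  exact (Set.ncard_le_ncard huniv (a4Words s t).finite_toSet).trans
    ((Set.ncard_coe_finset _).trans_le (card_a4Words_le s t))

theorem finite_and_nat_card_le_presentedGroup_a4Rels :
    Finite (PresentedGroup a4Rels) ∧ Nat.card (PresentedGroup a4Rels) ≤ 12 := by
  set a : PresentedGroup a4Rels := .of 0
  set b : PresentedGroup a4Rels := .of 1
  refine finite_and_nat_card_le_twelve_of_closure_eq_top (s := a) (t := b)
    (PresentedGroup.one_of_mem (rels := a4Rels) (x := .of 0 ^ 2) (by simp [a4Rels]))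
    (PresentedGroup.one_of_mem (rels := a4Rels) (x := .of 1 ^ 3) (by simp [a4Rels]))
    (PresentedGroup.one_of_mem (rels := a4Rels) (x := (.of 0 * .of 1) ^ 3) (by simp [a4Rels])) ?_
  rw [← PresentedGroup.closure_range_of, ← Matrix.range_cons_cons_empty a b ![]]
  congr
  funext k
  fin_cases k <;> rfl

namespace AlternatingFour

def s : alternatingGroup (Fin 4) :=
  ⟨swap 0 1 * swap 2 3, Perm.mem_alternatingGroup.mpr (by decide)⟩
def t : alternatingGroup (Fin 4) :=
  ⟨swap 0 2 * swap 0 1, Perm.mem_alternatingGroup.mpr (by decide)⟩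

theorem s_sq : s ^ 2 = 1 := by decide
theorem t_pow_three : t ^ 3 = 1 := by decide
theorem s_mul_t_pow_three : (s * t) ^ 3 = 1 := by decide

theorem closure_s_t : closure {s, t} = ⊤ := by
  have hmem : ∀ x, x ∈ a4Words s t := by decide
  exact eq_top_iff.mpr fun x _ => a4Words_subset_closure s t (hmem x)

theorem nat_card : Nat.card (alternatingGroup (Fin 4)) = 12 := by
  rw [Nat.card_eq_fintype_card]; decide

noncomputable def presentationEquiv : PresentedGroup a4Rels ≃* alternatingGroup (Fin 4) :=
  have hsurj : Function.Surjective (a4Lift s_sq t_pow_three s_mul_t_pow_three) := by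
    rw [← MonoidHom.range_eq_top, range_a4Lift, closure_s_t]
  have := finite_and_nat_card_le_presentedGroup_a4Rels.1
  MulEquiv.ofBijective _ (hsurj.bijective_of_nat_card_le
    (finite_and_nat_card_le_presentedGroup_a4Rels.2.trans nat_card.ge))

theorem presentationEquiv_of_zero : presentationEquiv (PresentedGroup.of 0) = s :=
  a4Lift_of_zero s_sq t_pow_three s_mul_t_pow_three

theorem eq_bot_of_s_notMem {N : Subgroup (alternatingGroup (Fin 4))} [N.Normal] (hN : s ∉ N) :
    N = ⊥ := by
  have hconj : ∀ p : alternatingGroup (Fin 4), p ≠ 1 →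
      ∃ c ∈ [s, t], ∃ d ∈ [1, t, t⁻¹], d * (p * (c * p⁻¹ * c⁻¹)) * d⁻¹ = s := by
    -- the commutator with `s` or `t` lands in `V₄ \ {1}`, on which conjugation by `t` is transitive
    decide
  refine N.bot_or_exists_ne_one.resolve_right fun ⟨p, hp, hp1⟩ => ?_
  obtain ⟨c, -, d, -, hcd⟩ := hconj p hp1
  exact hN (hcd ▸ ‹N.Normal›.conj_mem _ (mul_mem hp (‹N.Normal›.conj_mem _ (inv_mem hp) c)) d)

theorem injective_of_map_s_ne_one {Γ : Type*} [Group Γ] (f : alternatingGroup (Fin 4) →* Γ)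
    (hf : f s ≠ 1) : Function.Injective f :=
  (MonoidHom.ker_eq_bot_iff f).mp (eq_bot_of_s_notMem fun hs => hf hs)

end AlternatingFour

theorem nonempty_closure_mulEquiv_alternatingGroup_fin_four {Γ : Type*} [Group Γ] {x y : Γ}
    (hx : x ^ 2 = 1) (hy : y ^ 3 = 1) (hxy : (x * y) ^ 3 = 1) (hx1 : x ≠ 1) :
    Nonempty (closure {x, y} ≃* alternatingGroup (Fin 4)) := by
  set f := (a4Lift hx hy hxy).comp AlternatingFour.presentationEquiv.symm.toMonoidHom
  have hf : Function.Injective f := AlternatingFour.injective_of_map_s_ne_one f <| by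
    simpa [f, ← AlternatingFour.presentationEquiv_of_zero, a4Lift_of_zero] using hx1
  have hrange : f.range = closure {x, y} := by
    rw [MonoidHom.range_comp, MonoidHom.range_eq_top.mpr (MulEquiv.surjective _),
      ← MonoidHom.range_eq_map, range_a4Lift]
  exact ⟨((MonoidHom.ofInjective hf).trans (MulEquiv.subgroupCongr hrange)).symm⟩

namespace Matrix.GeneralLinearGroup

variable {n R : Type*} [Fintype n] [DecidableEq n] [CommRing R]

theorem mk_center_pow_eq_one {U : GL n R} {k : ℕ} {a : R} (h : U.val ^ k = Matrix.scalar n a) :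
    (U : GL n R ⧸ center (GL n R)) ^ k = 1 := by
  rw [← QuotientGroup.mk_pow, QuotientGroup.eq_one_iff, mem_center_iff_val_mem_range_scalar,
    Units.val_pow_eq_pow_val, h]
  exact ⟨a, rfl⟩

theorem mk_center_ne_one {U : GL n R} (h : U.val ∉ Set.range (Matrix.scalar n)) :
    (U : GL n R ⧸ center (GL n R)) ≠ 1 := by
  rwa [Ne, QuotientGroup.eq_one_iff, mem_center_iff_val_mem_range_scalar]

end Matrix.GeneralLinearGroup

section MobiusMatrices

variable {K : Type*} [Field K]

theorem neg_one_diag_sq : !![(-1 : K), 0; 0, 1] ^ 2 = scalar (Fin 2) 1 := by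
  simp only [sq, mul_fin_two, scalar_apply, diagonal_fin_two]
  norm_num

theorem neg_one_diag_not_mem_range_scalar (h2 : (2 : K) ≠ 0) :
    !![(-1 : K), 0; 0, 1] ∉ Set.range (scalar (Fin 2)) := by
  rintro ⟨a, ha⟩
  simp only [scalar_apply, diagonal_fin_two] at ha
  have h00 := congrFun (congrFun ha 0) 0
  have h11 := congrFun (congrFun ha 1) 1
  simp only [of_apply, cons_val', cons_val_zero, cons_val_one, empty_val',
    cons_val_fin_one] at h00 h11
  exact h2 (by linear_combination h00 - h11)

theorem cayley_pow_three {i : K} (hi : i ^ 2 = -1) :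
    !![(1 : K), -i; 1, i] ^ 3 = scalar (Fin 2) (2 - 2 * i) := by
  simp only [pow_three, mul_fin_two, scalar_apply, diagonal_fin_two]
  ext a b; fin_cases a <;> fin_cases b <;> simp <;> grind

theorem neg_one_diag_mul_cayley_pow_three {i : K} (hi : i ^ 2 = -1) :
    (!![(-1 : K), 0; 0, 1] * !![(1 : K), -i; 1, i]) ^ 3 = scalar (Fin 2) (-2 - 2 * i) := by
  simp only [pow_three, mul_fin_two, scalar_apply, diagonal_fin_two]
  ext a b; fin_cases a <;> fin_cases b <;> simp <;> grind

end MobiusMatrices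

/-- In `PGL(2,K)`, over a field `K` of odd characteristic containing `i` with
`i² = -1`, the subgroup generated by the Möbius transformations `θ₁ : x ↦ -x`
(matrix `[[-1,0],[0,1]]`) and `θ₂ : x ↦ (x-i)/(x+i)` (matrix `[[1,-i],[1,i]]`) is
isomorphic to the alternating group `A₄`. -/
theorem stmt_5 (K : Type*) [Field K] (h2 : (2 : K) ≠ 0) (i : K) (hi : i ^ 2 = -1)
    (h₁ : (!![(-1 : K), 0; 0, 1]).det ≠ 0) (h₂ : (!![(1 : K), -i; 1, i]).det ≠ 0) :
    Nonempty
      ((Subgroup.closure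
        ({(QuotientGroup.mk (Matrix.GeneralLinearGroup.mkOfDetNeZero _ h₁) : PGL2 K),
          (QuotientGroup.mk (Matrix.GeneralLinearGroup.mkOfDetNeZero _ h₂) : PGL2 K)} :
          Set (PGL2 K))) ≃* alternatingGroup (Fin 4)) := by
  refine nonempty_closure_mulEquiv_alternatingGroup_fin_four
    (Matrix.GeneralLinearGroup.mk_center_pow_eq_one neg_one_diag_sq)
    (Matrix.GeneralLinearGroup.mk_center_pow_eq_one (cayley_pow_three hi)) ?_
    (Matrix.GeneralLinearGroup.mk_center_ne_one (neg_one_diag_not_mem_range_scalar h2))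
  rw [← QuotientGroup.mk_mul]
  exact Matrix.GeneralLinearGroup.mk_center_pow_eq_one (neg_one_diag_mul_cayley_pow_three hi)
end

section
/- Let K be a field of odd characteristic, a ∈ K with a^2 + 108 ≠ 0, and K(θ, ρ) the function field with ρ^2 = θ^7 - aθ^6 - 33θ^5 + 2aθ^4 - 33θ^3 - aθ^2 + θ. Then δ = θ + 1/θ and ν = -ρ/θ^2 are fixed by the involution γ₂ : (θ,ρ) ↦ (1/θ, ρ/θ^4) and satisfy ν^2 = δ^3 - aδ^2 - 36δ + 4a. -/
/-!
The substitution `θ ↦ 1/θ` is a `K`-automorphism of `K(θ)`, and the right-hand side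
`f(θ) = θ⁷ - aθ⁶ - … + θ` is palindromic of degree 8, i.e. `f(1/θ) = θ⁻⁸ f(θ)`. Hence
`(ρ/θ⁴)² = f(1/θ)`, so the automorphism extends to the quadratic extension `K(θ, ρ)` by
`ρ ↦ ρ/θ⁴`, and it is an involution because `θ⁻⁴ · (1/θ)⁻⁴ = 1`. The elements `δ` and `ν` are
visibly invariant, and dividing the curve equation by `θ⁴` gives the equation for `ν² = ρ²/θ⁴`
in terms of `δ = θ + 1/θ`.
-/

open Polynomial
open scoped nonZeroDivisors

namespace RatFunc

theorem algHom_ext {K L : Type*} [CommRing K] [IsDomain K] [Semiring L] [Algebra K L]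
    {f g : RatFunc K →ₐ[K] L} (h : f X = g X) : f = g :=
  IsLocalization.algHom_ext K[X]⁰ <| Polynomial.algHom_ext <| by
    change f (algebraMap K[X] _ Polynomial.X) = g (algebraMap K[X] _ Polynomial.X)
    rwa [algebraMap_X]

variable {K : Type*} [Field K]

noncomputable def invX : RatFunc K →ₐ[K] RatFunc K :=
  (IntermediateField.val _).comp
    (algEquivOfTranscendental (X⁻¹ : RatFunc K)
      fun h => transcendental_X (IsAlgebraic.inv_iff.mp h)).toAlgHom

@[simp]
theorem invX_X : invX (X : RatFunc K) = X⁻¹ :=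
  algEquivOfTranscendental_X (K := K) (X⁻¹ : RatFunc K) _

theorem invX_invX (f : RatFunc K) : invX (invX f) = f := by
  suffices invX.comp invX = AlgHom.id K (RatFunc K) from AlgHom.congr_fun this f
  exact algHom_ext (by simp)

theorem invX_X_inv_pow_mul_self (n : ℕ) : invX ((X : RatFunc K)⁻¹ ^ n) * X⁻¹ ^ n = 1 := by
  rw [map_pow, map_inv₀, invX_X, inv_inv, ← mul_pow, mul_inv_cancel₀ X_ne_zero, one_pow]

theorem invX_septic (a : K) :
    invX (X ^ 7 - C a * X ^ 6 - 33 * X ^ 5 + 2 * C a * X ^ 4 - 33 * X ^ 3 - C a * X ^ 2 + X) =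
      (X⁻¹ ^ 4) ^ 2 * (X ^ 7 - C a * X ^ 6 - 33 * X ^ 5 + 2 * C a * X ^ 4 - 33 * X ^ 3
        - C a * X ^ 2 + X) := by
  simp only [← algebraMap_eq_C, map_add, map_sub, map_mul, map_pow, map_ofNat, invX_X,
    AlgHom.commutes]
  field_simp
  ring

end RatFunc

namespace AdjoinRoot

variable {K F : Type*} [CommRing K] [CommRing F] [Algebra K F]

theorem root_sq (f : F) : root (X ^ 2 - C f) ^ 2 = of (X ^ 2 - C f) f := by
  have h := eval₂_root (X ^ 2 - C f)
  rwa [eval₂_sub, eval₂_pow, eval₂_X, eval₂_C, sub_eq_zero] at h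

noncomputable def liftSqrt (f : F) (τ : F →ₐ[K] F) (c : F) (hc : c ^ 2 * f = τ f) :
    AdjoinRoot (X ^ 2 - C f) →ₐ[K] AdjoinRoot (X ^ 2 - C f) :=
  liftAlgHom _ ((ofAlgHom K _).comp τ) (of _ c * root _) <| by
    simp [mul_pow, root_sq, ← map_pow, ← map_mul, hc]

variable {f : F} {τ : F →ₐ[K] F} {c : F} (hc : c ^ 2 * f = τ f)

theorem liftSqrt_of (r : F) : liftSqrt f τ c hc (of _ r) = of _ (τ r) :=
  liftAlgHom_of _ _ _ _ r

theorem liftSqrt_root : liftSqrt f τ c hc (root _) = of _ c * root _ :=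
  liftAlgHom_root _ _ _ _

theorem liftSqrt_comp_self (hτ : ∀ r, τ (τ r) = r) (hcτ : τ c * c = 1) :
    (liftSqrt f τ c hc).comp (liftSqrt f τ c hc) = AlgHom.id K _ := by
  refine algHom_ext' (AlgHom.ext fun r => ?_) ?_
  · simp only [AlgHom.comp_apply, coe_ofAlgHom, liftSqrt_of, hτ, AlgHom.id_apply]
  · rw [AlgHom.comp_apply, liftSqrt_root, map_mul, liftSqrt_of, liftSqrt_root, ← mul_assoc,
      ← map_mul, hcτ, map_one, one_mul, AlgHom.id_apply]

noncomputable def liftSqrtEquiv (hτ : ∀ r, τ (τ r) = r) (hcτ : τ c * c = 1) :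
    AdjoinRoot (X ^ 2 - C f) ≃ₐ[K] AdjoinRoot (X ^ 2 - C f) :=
  AlgEquiv.ofAlgHom _ _ (liftSqrt_comp_self hc hτ hcτ) (liftSqrt_comp_self hc hτ hcτ)

theorem liftSqrtEquiv_apply (hτ : ∀ r, τ (τ r) = r) (hcτ : τ c * c = 1) (x) :
    liftSqrtEquiv hc hτ hcτ x = liftSqrt f τ c hc x :=
  rfl

theorem liftSqrtEquiv_mul_self (hτ : ∀ r, τ (τ r) = r) (hcτ : τ c * c = 1) :
    liftSqrtEquiv hc hτ hcτ * liftSqrtEquiv hc hτ hcτ = 1 :=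
  AlgEquiv.ext fun x => AlgHom.congr_fun (liftSqrt_comp_self hc hτ hcτ) x

end AdjoinRoot

theorem sq_neg_div_sq_eq_of_sq_eq_septic {L : Type*} [Field L] {θ ρ a : L} (hθ : θ ≠ 0)
    (hρ : ρ ^ 2 = θ ^ 7 - a * θ ^ 6 - 33 * θ ^ 5 + 2 * a * θ ^ 4 - 33 * θ ^ 3 - a * θ ^ 2 + θ) :
    (-ρ / θ ^ 2) ^ 2 = (θ + 1 / θ) ^ 3 - a * (θ + 1 / θ) ^ 2 - 36 * (θ + 1 / θ) + 4 * a := by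
  rw [div_pow, neg_sq, hρ]
  field_simp
  ring

section Involution

variable {L F : Type*} [Field L] [FunLike F L L] [RingHomClass F L L] {σ : F} {θ ρ : L}

theorem map_add_one_div_eq_self (hσθ : σ θ = 1 / θ) : σ (θ + 1 / θ) = θ + 1 / θ := by
  rw [map_add, map_div₀, map_one, hσθ, one_div_one_div, add_comm]

theorem map_neg_div_sq_eq_self (hθ : θ ≠ 0) (hσθ : σ θ = 1 / θ) (hσρ : σ ρ = ρ / θ ^ 4) :
    σ (-ρ / θ ^ 2) = -ρ / θ ^ 2 := by
  rw [map_div₀, map_neg, hσρ, map_pow, hσθ]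
  field_simp

end Involution

theorem stmt_8_general (K : Type*) [Field K] (a : K)
    (p : Polynomial (RatFunc K))
    (hp : p = X ^ 2 - C ((RatFunc.X : RatFunc K) ^ 7 - RatFunc.C a * RatFunc.X ^ 6
      - 33 * RatFunc.X ^ 5 + 2 * RatFunc.C a * RatFunc.X ^ 4 - 33 * RatFunc.X ^ 3
      - RatFunc.C a * RatFunc.X ^ 2 + RatFunc.X))
    [Fact (Irreducible p)] :
    ∃ γ₂ : AdjoinRoot p ≃ₐ[K] AdjoinRoot p,
      let θ : AdjoinRoot p := AdjoinRoot.of p RatFunc.X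
      let ρ : AdjoinRoot p := AdjoinRoot.root p
      let aF : AdjoinRoot p := algebraMap K (AdjoinRoot p) a
      let δ : AdjoinRoot p := θ + 1 / θ
      let ν : AdjoinRoot p := -ρ / θ ^ 2
      γ₂ θ = 1 / θ ∧ γ₂ ρ = ρ / θ ^ 4 ∧ γ₂ * γ₂ = 1 ∧
      γ₂ δ = δ ∧ γ₂ ν = ν ∧
      ν ^ 2 = δ ^ 3 - aF * δ ^ 2 - 36 * δ + 4 * aF := by
  subst hp
  set γ := AdjoinRoot.liftSqrtEquiv (RatFunc.invX_septic a).symm RatFunc.invX_invX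
    (RatFunc.invX_X_inv_pow_mul_self 4)
  refine ⟨γ, ?_⟩
  intro θ ρ aF δ ν
  have hθ : θ ≠ 0 := (_root_.map_ne_zero _).mpr RatFunc.X_ne_zero
  have hγθ : γ θ = 1 / θ := by
    rw [AdjoinRoot.liftSqrtEquiv_apply, AdjoinRoot.liftSqrt_of, RatFunc.invX_X, map_inv₀, one_div]
  have hγρ : γ ρ = ρ / θ ^ 4 := by
    rw [AdjoinRoot.liftSqrtEquiv_apply, AdjoinRoot.liftSqrt_root, map_pow, map_inv₀, inv_pow,
      ← div_eq_inv_mul]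
  have hC : AdjoinRoot.of _ (RatFunc.C a) = aF :=
    (IsScalarTower.algebraMap_apply K (RatFunc K) _ a).symm
  have hρ : ρ ^ 2 = θ ^ 7 - aF * θ ^ 6 - 33 * θ ^ 5 + 2 * aF * θ ^ 4 - 33 * θ ^ 3
      - aF * θ ^ 2 + θ := by
    rw [AdjoinRoot.root_sq]
    simp only [map_add, map_sub, map_mul, map_pow, map_ofNat, hC]
    rfl
  exact ⟨hγθ, hγρ, AdjoinRoot.liftSqrtEquiv_mul_self _ _ _, map_add_one_div_eq_self hγθ,
    map_neg_div_sq_eq_self hθ hγθ hγρ, sq_neg_div_sq_eq_of_sq_eq_septic hθ hρ⟩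

/-- In the function field `K(θ,ρ)` with
`ρ² = θ⁷ - aθ⁶ - 33θ⁵ + 2aθ⁴ - 33θ³ - aθ² + θ` (realized as `AdjoinRoot p` over
`K(θ) = RatFunc K`), the elements `δ = θ + 1/θ` and `ν = -ρ/θ²` are fixed by the involution
`γ₂ : (θ,ρ) ↦ (1/θ, ρ/θ⁴)` and satisfy `ν² = δ³ - aδ² - 36δ + 4a`. -/
theorem stmt_8 (K : Type*) [Field K] (h2 : (2 : K) ≠ 0) (a : K) (ha : a ^ 2 + 108 ≠ 0)
    (p : Polynomial (RatFunc K))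
    (hp : p = X ^ 2 - C ((RatFunc.X : RatFunc K) ^ 7 - RatFunc.C a * RatFunc.X ^ 6
      - 33 * RatFunc.X ^ 5 + 2 * RatFunc.C a * RatFunc.X ^ 4 - 33 * RatFunc.X ^ 3
      - RatFunc.C a * RatFunc.X ^ 2 + RatFunc.X))
    [Fact (Irreducible p)] :
    ∃ γ₂ : AdjoinRoot p ≃ₐ[K] AdjoinRoot p,
      let θ : AdjoinRoot p := AdjoinRoot.of p RatFunc.X
      let ρ : AdjoinRoot p := AdjoinRoot.root p
      let aF : AdjoinRoot p := algebraMap K (AdjoinRoot p) a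
      let δ : AdjoinRoot p := θ + 1 / θ
      let ν : AdjoinRoot p := -ρ / θ ^ 2
      γ₂ θ = 1 / θ ∧ γ₂ ρ = ρ / θ ^ 4 ∧ γ₂ * γ₂ = 1 ∧
      γ₂ δ = δ ∧ γ₂ ν = ν ∧
      ν ^ 2 = δ ^ 3 - aF * δ ^ 2 - 36 * δ + 4 * aF :=
  stmt_8_general K a p hp
end

section
/- Let K be a field of odd characteristic, a ∈ K with a^2 + 108 ≠ 0, and K(θ, ρ) the function field with ρ^2 = θ^7 - aθ^6 - 33θ^5 + 2aθ^4 - 33θ^3 - aθ^2 + θ. Then δ = θ + 1/θ and ε = (θ^2 ρ - ρ)/θ^3 are fixed by γ₃ : (θ, ρ) ↦ (1/θ, -ρ/θ^4) and satisfy ε^2 = δ^5 - aδ^4 - 40δ^3 + 8aδ^2 + 144δ - 16a = (δ^2 - 4)(δ^3 - aδ^2 - 36δ + 4a). -/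
/-!
Write `f(θ) = θ⁷ - aθ⁶ - 33θ⁵ + 2aθ⁴ - 33θ³ - aθ² + θ`. Since `f(θ)/θ⁴` is invariant under
`θ ↦ 1/θ`, we get `f(1/θ) = f(θ)/θ⁸ = (-ρ/θ⁴)²`. As `θ` is transcendental, `θ ↦ 1/θ` is an
automorphism of `K(θ)`, and this identity lets it extend by `ρ ↦ -ρ/θ⁴` to an involution `γ₃` of
`K(θ, ρ)`. In terms of `δ = θ + 1/θ` one has `(θ - 1/θ)² = δ² - 4` and
`f(θ)/θ⁴ = δ³ - aδ² - 36δ + 4a`, whose product is `ε² = (θ - 1/θ)² f(θ)/θ⁴`.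
-/

open Polynomial

def curveRhs {R : Type*} [CommRing R] (a t : R) : R :=
  t ^ 7 - a * t ^ 6 - 33 * t ^ 5 + 2 * a * t ^ 4 - 33 * t ^ 3 - a * t ^ 2 + t

theorem map_curveRhs {R S F : Type*} [CommRing R] [CommRing S] [FunLike F R S]
    [RingHomClass F R S] (φ : F) (a t : R) : φ (curveRhs a t) = curveRhs (φ a) (φ t) := by
  simp only [curveRhs, map_add, map_sub, map_mul, map_pow, map_ofNat]

section Field

variable {F : Type*} [Field F] {a θ ρ : F}

theorem curveRhs_inv (hθ : θ ≠ 0) : curveRhs a θ⁻¹ = curveRhs a θ / θ ^ 8 := by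
  simp only [curveRhs]
  field_simp
  ring

theorem neg_div_pow_four_sq (hθ : θ ≠ 0) (hρ : ρ ^ 2 = curveRhs a θ) :
    (-ρ / θ ^ 4) ^ 2 = curveRhs a θ⁻¹ := by
  rw [curveRhs_inv hθ, ← hρ]
  ring

theorem eps_sq_eq_quintic (hθ : θ ≠ 0) (hρ : ρ ^ 2 = curveRhs a θ) :
    let δ := θ + 1 / θ
    ((θ ^ 2 * ρ - ρ) / θ ^ 3) ^ 2 =
      δ ^ 5 - a * δ ^ 4 - 40 * δ ^ 3 + 8 * a * δ ^ 2 + 144 * δ - 16 * a := by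
  intro δ
  rw [show ((θ ^ 2 * ρ - ρ) / θ ^ 3) ^ 2 = (θ ^ 2 - 1) ^ 2 * ρ ^ 2 / θ ^ 6 by ring, hρ]
  simp only [curveRhs, δ]
  field_simp
  ring

theorem reflection_eps_eq (hθ : θ ≠ 0) :
    (θ⁻¹ ^ 2 * (-ρ / θ ^ 4) - -ρ / θ ^ 4) / θ⁻¹ ^ 3 = (θ ^ 2 * ρ - ρ) / θ ^ 3 := by
  field_simp
  ring

end Field

theorem AdjoinRoot.root_sq_of_eq_X_sq_sub_C {R : Type*} [CommRing R] {p : R[X]} {f : R}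
    (hp : p = X ^ 2 - C f) : root p ^ 2 = of p f := by
  have h := AdjoinRoot.eval₂_root p
  rw [hp] at h ⊢
  simpa only [eval₂_sub, eval₂_pow, eval₂_X, eval₂_C, sub_eq_zero] using h

theorem Transcendental.inv {R L : Type*} [CommRing R] [Field L] [Algebra R L] {x : L}
    (hx : Transcendental R x) : Transcendental R x⁻¹ :=
  mt IsAlgebraic.inv_iff.mp hx

section

open IntermediateField

namespace RatFunc

variable {K L : Type*} [Field K] [Field L] [Algebra K L]

noncomputable def liftOfTranscendental (t : L) (ht : Transcendental K t) : RatFunc K →ₐ[K] L :=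
  (K⟮t⟯).val.comp (algEquivOfTranscendental t ht).toAlgHom

@[simp]
theorem liftOfTranscendental_X (t : L) (ht : Transcendental K t) :
    liftOfTranscendental t ht X = t := by
  simp [liftOfTranscendental]

end RatFunc

end

namespace AdjoinRoot

variable {K : Type*} [Field K]

theorem algHom_ext_ratFunc {T : Type*} [CommRing T] [Algebra K T] (p : (RatFunc K)[X])
    {g₁ g₂ : AdjoinRoot p →ₐ[K] T} (hX : g₁ (of p RatFunc.X) = g₂ (of p RatFunc.X))
    (hroot : g₁ (root p) = g₂ (root p)) : g₁ = g₂ := by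
  refine algHom_ext' ?_ hroot
  apply IsLocalization.algHom_ext (nonZeroDivisors K[X])
  apply Polynomial.algHom_ext
  change g₁ (of p (algebraMap K[X] (RatFunc K) X)) = g₂ (of p (algebraMap K[X] (RatFunc K) X))
  rwa [RatFunc.algebraMap_X]

theorem root_sq_eq_curveRhs {a : K} {p : (RatFunc K)[X]}
    (hp : p = X ^ 2 - C (curveRhs (RatFunc.C a) RatFunc.X)) :
    root p ^ 2 = curveRhs (algebraMap K (AdjoinRoot p) a) (of p RatFunc.X) := by
  rw [root_sq_of_eq_X_sq_sub_C hp, map_curveRhs, ← RatFunc.algebraMap_eq_C, ← RingHom.comp_apply,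
    ← algebraMap_eq']

variable (p : (RatFunc K)[X]) [Fact (Irreducible p)]

theorem transcendental_of_X : Transcendental K (of p RatFunc.X) := by
  rw [← algebraMap_eq,
    transcendental_algebraMap_iff (algebraMap (RatFunc K) (AdjoinRoot p)).injective]
  exact RatFunc.transcendental_X

theorem of_X_ne_zero : of p RatFunc.X ≠ 0 :=
  fun h => transcendental_of_X p (h ▸ isAlgebraic_zero)

variable {p} {a : K}

noncomputable def curveReflection (hp : p = X ^ 2 - C (curveRhs (RatFunc.C a) RatFunc.X)) :
    AdjoinRoot p →ₐ[K] AdjoinRoot p :=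
  liftAlgHom p
    (RatFunc.liftOfTranscendental (of p RatFunc.X)⁻¹ (transcendental_of_X p).inv)
    (-root p / of p RatFunc.X ^ 4) <| by
    simp only [hp, eval₂_sub, eval₂_pow, eval₂_X, eval₂_C, sub_eq_zero,
      neg_div_pow_four_sq (of_X_ne_zero p) (root_sq_eq_curveRhs hp)]
    rw [AlgHom.coe_toRingHom, map_curveRhs, ← RatFunc.algebraMap_eq_C, AlgHom.commutes,
      RatFunc.liftOfTranscendental_X]

variable (hp : p = X ^ 2 - C (curveRhs (RatFunc.C a) RatFunc.X))
include hp

theorem curveReflection_of_X : curveReflection hp (of p RatFunc.X) = (of p RatFunc.X)⁻¹ := by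
  rw [curveReflection, liftAlgHom_of, RatFunc.liftOfTranscendental_X]

theorem curveReflection_root : curveReflection hp (root p) = -root p / of p RatFunc.X ^ 4 :=
  liftAlgHom_root ..

theorem curveReflection_comp_self :
    (curveReflection hp).comp (curveReflection hp) = AlgHom.id K _ :=
  algHom_ext_ratFunc p
    (by simp only [AlgHom.comp_apply, AlgHom.id_apply, curveReflection_of_X, map_inv₀, inv_inv])
    (by
      simp only [AlgHom.comp_apply, AlgHom.id_apply, curveReflection_root, map_div₀, map_neg,
        map_pow, curveReflection_of_X]
      field_simp [of_X_ne_zero p])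

end AdjoinRoot

theorem stmt_9_general (K : Type*) [Field K] (a : K)
    (p : Polynomial (RatFunc K))
    (hp : p = X ^ 2 - C ((RatFunc.X : RatFunc K) ^ 7 - RatFunc.C a * RatFunc.X ^ 6
      - 33 * RatFunc.X ^ 5 + 2 * RatFunc.C a * RatFunc.X ^ 4 - 33 * RatFunc.X ^ 3
      - RatFunc.C a * RatFunc.X ^ 2 + RatFunc.X))
    [Fact (Irreducible p)] :
    ∃ γ₃ : AdjoinRoot p ≃ₐ[K] AdjoinRoot p,
      let θ : AdjoinRoot p := AdjoinRoot.of p RatFunc.X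
      let ρ : AdjoinRoot p := AdjoinRoot.root p
      let aF : AdjoinRoot p := algebraMap K (AdjoinRoot p) a
      let δ : AdjoinRoot p := θ + 1 / θ
      let ε : AdjoinRoot p := (θ ^ 2 * ρ - ρ) / θ ^ 3
      γ₃ θ = 1 / θ ∧ γ₃ ρ = -ρ / θ ^ 4 ∧ γ₃ * γ₃ = 1 ∧
      γ₃ δ = δ ∧ γ₃ ε = ε ∧
      ε ^ 2 = δ ^ 5 - aF * δ ^ 4 - 40 * δ ^ 3 + 8 * aF * δ ^ 2 + 144 * δ - 16 * aF ∧
      ε ^ 2 = (δ ^ 2 - 4) * (δ ^ 3 - aF * δ ^ 2 - 36 * δ + 4 * aF) := by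
  replace hp : p = X ^ 2 - C (curveRhs (RatFunc.C a) RatFunc.X) := hp
  have hθ := AdjoinRoot.of_X_ne_zero p
  have hρ := AdjoinRoot.root_sq_eq_curveRhs hp
  have hγγ := AdjoinRoot.curveReflection_comp_self hp
  refine ⟨AlgEquiv.ofAlgHom _ _ hγγ hγγ, ?_⟩
  simp only [AlgEquiv.ofAlgHom_apply]
  refine ⟨by rw [AdjoinRoot.curveReflection_of_X, one_div], AdjoinRoot.curveReflection_root hp,
    AlgEquiv.ext (AlgHom.congr_fun hγγ), ?_, ?_, eps_sq_eq_quintic hθ hρ,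
    (eps_sq_eq_quintic hθ hρ).trans (by ring)⟩
  · rw [one_div, map_add, map_inv₀, AdjoinRoot.curveReflection_of_X, inv_inv, add_comm]
  · rw [map_div₀, map_sub, map_mul, map_pow, map_pow, AdjoinRoot.curveReflection_of_X,
      AdjoinRoot.curveReflection_root]
    exact reflection_eps_eq hθ

/-- In the function field `K(θ,ρ)` with
`ρ² = θ⁷ - aθ⁶ - 33θ⁵ + 2aθ⁴ - 33θ³ - aθ² + θ`, the elements `δ = θ + 1/θ` and
`ε = (θ²ρ - ρ)/θ³` are fixed by `γ₃ : (θ,ρ) ↦ (1/θ, -ρ/θ⁴)` and satisfy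
`ε² = δ⁵ - aδ⁴ - 40δ³ + 8aδ² + 144δ - 16a = (δ² - 4)(δ³ - aδ² - 36δ + 4a)`. -/
theorem stmt_9 (K : Type*) [Field K] (h2 : (2 : K) ≠ 0) (a : K) (ha : a ^ 2 + 108 ≠ 0)
    (p : Polynomial (RatFunc K))
    (hp : p = X ^ 2 - C ((RatFunc.X : RatFunc K) ^ 7 - RatFunc.C a * RatFunc.X ^ 6
      - 33 * RatFunc.X ^ 5 + 2 * RatFunc.C a * RatFunc.X ^ 4 - 33 * RatFunc.X ^ 3
      - RatFunc.C a * RatFunc.X ^ 2 + RatFunc.X))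
    [Fact (Irreducible p)] :
    ∃ γ₃ : AdjoinRoot p ≃ₐ[K] AdjoinRoot p,
      let θ : AdjoinRoot p := AdjoinRoot.of p RatFunc.X
      let ρ : AdjoinRoot p := AdjoinRoot.root p
      let aF : AdjoinRoot p := algebraMap K (AdjoinRoot p) a
      let δ : AdjoinRoot p := θ + 1 / θ
      let ε : AdjoinRoot p := (θ ^ 2 * ρ - ρ) / θ ^ 3
      γ₃ θ = 1 / θ ∧ γ₃ ρ = -ρ / θ ^ 4 ∧ γ₃ * γ₃ = 1 ∧
      γ₃ δ = δ ∧ γ₃ ε = ε ∧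
      ε ^ 2 = δ ^ 5 - aF * δ ^ 4 - 40 * δ ^ 3 + 8 * aF * δ ^ 2 + 144 * δ - 16 * aF ∧
      ε ^ 2 = (δ ^ 2 - 4) * (δ ^ 3 - aF * δ ^ 2 - 36 * δ + 4 * aF) :=
  stmt_9_general K a p hp
end

section
/- Over a field K of odd characteristic containing ξ with ξ^2 = -1, the map φ(X,Y) = (-X - 1, ξY) defines an isomorphism between the elliptic curves Y^2 = X^3 + ((a+6)/4)X^2 + ((a-6)/4)X - 1 and Y^2 = X^3 + ((-a+6)/4)X^2 + ((-a-6)/4)X - 1. -/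
/-! The substitution `X ↦ -X - 1` turns the cubic of the curve with parameter `a` into minus the
cubic with parameter `-a` (an identity that needs `4` to be invertible), and the sign is absorbed
by `Y ↦ ξ Y` since `ξ² = -1`. The same substitution with `-ξ` in place of `ξ` is the inverse. -/

namespace NegTwist

variable {K : Type*} [Field K]

def cubic (a x : K) : K :=
  x ^ 3 + (a + 6) / 4 * x ^ 2 + (a - 6) / 4 * x - 1

lemma cubic_neg_sub_one (h2 : (2 : K) ≠ 0) (a x : K) : cubic (-a) (-x - 1) = -cubic a x := by
  have h4 : (4 : K) ≠ 0 := by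
    rw [show (4 : K) = 2 * 2 by norm_num]
    exact mul_ne_zero h2 h2
  unfold cubic
  field_simp
  ring

lemma mul_sq_eq_cubic_neg_sub_one (h2 : (2 : K) ≠ 0) {ξ : K} (hξ : ξ ^ 2 = -1) {a x y : K}
    (h : y ^ 2 = cubic a x) : (ξ * y) ^ 2 = cubic (-a) (-x - 1) := by
  rw [mul_pow, hξ, h, cubic_neg_sub_one h2]
  ring

def equiv (h2 : (2 : K) ≠ 0) {ξ : K} (hξ : ξ ^ 2 = -1) (a : K) :
    {P : K × K // P.2 ^ 2 = cubic a P.1} ≃ {P : K × K // P.2 ^ 2 = cubic (-a) P.1} where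
  toFun P := ⟨(-P.1.1 - 1, ξ * P.1.2), mul_sq_eq_cubic_neg_sub_one h2 hξ P.2⟩
  invFun P := ⟨(-P.1.1 - 1, -ξ * P.1.2), by
    simpa only [neg_neg] using
      mul_sq_eq_cubic_neg_sub_one h2 (by rw [neg_sq, hξ]) P.2⟩
  left_inv P := Subtype.ext <| Prod.ext (by simp) (by
    change -ξ * (ξ * P.1.2) = P.1.2
    linear_combination -P.1.2 * hξ)
  right_inv P := Subtype.ext <| Prod.ext (by simp) (by
    change ξ * (-ξ * P.1.2) = P.1.2
    linear_combination -P.1.2 * hξ)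

end NegTwist

theorem stmt_13_general (K : Type*) [Field K] (h2 : (2 : K) ≠ 0) (ξ : K) (hξ : ξ ^ 2 = -1)
    (a : K) :
    ∃ e : {P : K × K // P.2 ^ 2 = P.1 ^ 3 + (a + 6) / 4 * P.1 ^ 2 + (a - 6) / 4 * P.1 - 1} ≃
        {P : K × K // P.2 ^ 2 = P.1 ^ 3 + (-a + 6) / 4 * P.1 ^ 2 + (-a - 6) / 4 * P.1 - 1},
      ∀ P, (e P : K × K) = (-(P : K × K).1 - 1, ξ * (P : K × K).2) :=
  ⟨NegTwist.equiv h2 hξ a, fun _ => rfl⟩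

/-- Over a field `K` of odd characteristic containing `ξ` with `ξ² = -1`,
the map `φ(X,Y) = (-X-1, ξY)` is a bijection between the point sets of the elliptic curves
`Y² = X³ + ((a+6)/4)X² + ((a-6)/4)X - 1` and `Y² = X³ + ((-a+6)/4)X² + ((-a-6)/4)X - 1`. -/
theorem stmt_13 (K : Type*) [Field K] (h2 : (2 : K) ≠ 0) (ξ : K) (hξ : ξ ^ 2 = -1)
    (a : K) (ha : a ^ 2 + 108 ≠ 0) :
    ∃ e : {P : K × K // P.2 ^ 2 = P.1 ^ 3 + (a + 6) / 4 * P.1 ^ 2 + (a - 6) / 4 * P.1 - 1} ≃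
        {P : K × K // P.2 ^ 2 = P.1 ^ 3 + (-a + 6) / 4 * P.1 ^ 2 + (-a - 6) / 4 * P.1 - 1},
      ∀ P, (e P : K × K) = (-(P : K × K).1 - 1, ξ * (P : K × K).2) :=
  stmt_13_general K h2 ξ hξ a
end

section
/- Over the rationals, the map θ(x, y) = ((x^3/4 - x/9)/(x + 2/9)^2, (x^3 y/8 + x^2 y/12 + x y/18 - y/81)/(x + 2/9)^3) sends points of the elliptic curve y^2 = x^3 + (11/12)x^2 + (1/9)x + 1/81 to points of the elliptic curve Y^2 = X^3 + (9/16)X^2 + (3/16)X + 1/64. -/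
/-! With `D = x + 2/9`, `u = x³/4 - x/9` and `y·P(x)` the numerator of the second coordinate, the
equation of `C₁` at `(u/D², yP/D³)` is, after clearing `D⁶`, the equation `y²P² = u³ + …` of
weight 6; substituting the equation of `C₂` for `y²` turns it into a polynomial identity in `x`. -/

theorem div_sq_cube_eq_cubic_iff {K : Type*} [Field K] {a b c u v d : K} (hd : d ≠ 0) :
    (v / d ^ 3) ^ 2 = (u / d ^ 2) ^ 3 + a * (u / d ^ 2) ^ 2 + b * (u / d ^ 2) + c ↔
      v ^ 2 = u ^ 3 + a * u ^ 2 * d ^ 2 + b * u * d ^ 4 + c * d ^ 6 := by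
  field_simp

theorem theta_numerators_identity {K : Type*} [Field K] [CharZero K] (x : K) :
    (x ^ 3 + 11 / 12 * x ^ 2 + 1 / 9 * x + 1 / 81) * (x ^ 3 / 8 + x ^ 2 / 12 + x / 18 - 1 / 81) ^ 2 =
      (x ^ 3 / 4 - x / 9) ^ 3 + 9 / 16 * (x ^ 3 / 4 - x / 9) ^ 2 * (x + 2 / 9) ^ 2
        + 3 / 16 * (x ^ 3 / 4 - x / 9) * (x + 2 / 9) ^ 4 + 1 / 64 * (x + 2 / 9) ^ 6 := by
  ring

/-- Over `ℚ`, the map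
`θ(x,y) = ((x³/4 - x/9)/(x + 2/9)², (x³y/8 + x²y/12 + xy/18 - y/81)/(x + 2/9)³)`
sends affine points of `y² = x³ + (11/12)x² + (1/9)x + 1/81` (with `x ≠ -2/9`) to points of
`Y² = X³ + (9/16)X² + (3/16)X + 1/64`. -/
theorem stmt_15 (x y : ℚ) (hx : x ≠ -2 / 9)
    (h : y ^ 2 = x ^ 3 + 11 / 12 * x ^ 2 + 1 / 9 * x + 1 / 81) :
    ((x ^ 3 * y / 8 + x ^ 2 * y / 12 + x * y / 18 - y / 81) / (x + 2 / 9) ^ 3) ^ 2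
      = ((x ^ 3 / 4 - x / 9) / (x + 2 / 9) ^ 2) ^ 3
        + 9 / 16 * ((x ^ 3 / 4 - x / 9) / (x + 2 / 9) ^ 2) ^ 2
        + 3 / 16 * ((x ^ 3 / 4 - x / 9) / (x + 2 / 9) ^ 2) + 1 / 64 := by
  have hd : x + 2 / 9 ≠ 0 := fun h0 => hx (by linarith)
  rw [div_sq_cube_eq_cubic_iff hd, ← theta_numerators_identity, ← h]
  ring
end

section
/- Let K be an algebraically closed field of odd characteristic and let K(u,v) be the genus-2 hyperelliptic function field with v^2 = 4u^6 - 12u^5 + 21u^4 - 22u^3 + 21u^2 - 12u + 4. The maps ψ₁(u,v) = (u,-v) and ψ₂(u,v) = (-u+1, v) are commuting involutory automorphisms; the elements u₁ = -u^2 + u and v₁ = v are fixed by ψ₂ and satisfy v₁^2 = -4u₁^3 + 9u₁^2 - 12u₁ + 4, while u₂ = u₁ and v₂ = v(2u-1) are fixed by ψ₁ψ₂ and satisfy v₂^2 = (-4u₂^3 + 9u₂^2 - 12u₂ + 4)(-4u₂ + 1). -/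
/-!
Write `f(u) = 4u⁶ - 12u⁵ + 21u⁴ - 22u³ + 21u² - 12u + 4`, so that the function field is
`K(u)[v]/(v² - f(u))`. The hyperelliptic involution `ψ₁ : v ↦ -v` exists for any quadratic
extension `v² = f`. Since `f(u) = -4u₁³ + 9u₁² - 12u₁ + 4` with `u₁ = u(1 - u)`, the sextic is
fixed by the involution `u ↦ 1 - u` of `K(u)`, which therefore lifts to `ψ₂` fixing `v`. Both
maps are determined by their values on `K(u)` and on `v`, which gives the relations between them;
`ψ₁ ≠ 1` because `2v ≠ 0`, and `ψ₂ ≠ 1` because `1 - u ≠ u` in `K(u)`. The remaining claims are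
polynomial identities modulo `v² = f(u)`.
-/

open Polynomial

noncomputable section

namespace AdjoinRoot

variable {R S : Type*} [CommRing R] [CommRing S] [Algebra R S]

lemma algEquiv_ext {p : S[X]} {e₁ e₂ : AdjoinRoot p ≃ₐ[R] AdjoinRoot p}
    (hof : ∀ s, e₁ (of p s) = e₂ (of p s)) (hroot : e₁ (root p) = e₂ (root p)) : e₁ = e₂ :=
  AlgEquiv.coe_toAlgHom_injective <| algHom_ext' (AlgHom.ext hof) hroot

lemma root_X_sq_sub_C_sq (f : S) : root (X ^ 2 - C f) ^ 2 = of (X ^ 2 - C f) f := by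
  have h := eval₂_root (X ^ 2 - C f)
  rwa [eval₂_sub, eval₂_X_pow, eval₂_C, sub_eq_zero] at h

lemma of_X_sq_sub_C_injective [IsDomain S] (f : S) : Function.Injective (of (X ^ 2 - C f)) :=
  of.injective_of_degree_ne_zero (by rw [degree_X_pow_sub_C two_pos]; norm_num)

variable (R) in
def negRoot (f : S) : AdjoinRoot (X ^ 2 - C f) ≃ₐ[R] AdjoinRoot (X ^ 2 - C f) :=
  let g := liftAlgHom (X ^ 2 - C f) (ofAlgHom R _) (-root _) <| by
    simp [root_X_sq_sub_C_sq]
  AlgEquiv.ofAlgHom g g (by ext <;> simp [g]) (by ext <;> simp [g])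

@[simp]
lemma negRoot_of (f s : S) : negRoot R f (of _ s) = of _ s := by
  simp [negRoot]

@[simp]
lemma negRoot_root (f : S) : negRoot R f (root _) = -root _ := by
  simp [negRoot]

lemma negRoot_sq (f : S) : negRoot R f ^ 2 = 1 :=
  algEquiv_ext (by simp [sq]) (by simp [sq])

lemma orderOf_negRoot [IsDomain S] {f : S} (h2 : (2 : S) ≠ 0) (hf : f ≠ 0) :
    orderOf (negRoot R f) = 2 := by
  refine orderOf_eq_prime (negRoot_sq f) fun h => ?_
  have hroot : 2 * root (X ^ 2 - C f) = 0 := by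
    have := negRoot_root (R := R) f
    rw [h, AlgEquiv.one_apply] at this
    linear_combination this
  have : 2 * 2 * f = 0 := of_X_sq_sub_C_injective f <| by
    simp only [map_mul, map_ofNat, map_zero, ← root_X_sq_sub_C_sq]
    linear_combination (2 * root (X ^ 2 - C f)) * hroot
  simp [h2, hf] at this

def mapRoot {f : S} (σ : S ≃ₐ[R] S) (hσ : σ f = f) :
    AdjoinRoot (X ^ 2 - C f) ≃ₐ[R] AdjoinRoot (X ^ 2 - C f) :=
  mapAlgEquiv σ _ _ (by simp [hσ])

@[simp]
lemma mapRoot_of {f : S} (σ : S ≃ₐ[R] S) (hσ : σ f = f) (s : S) :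
    mapRoot σ hσ (of _ s) = of _ (σ s) := by
  simp [mapRoot]

@[simp]
lemma mapRoot_root {f : S} (σ : S ≃ₐ[R] S) (hσ : σ f = f) :
    mapRoot σ hσ (root _) = root _ := by
  simp [mapRoot]

lemma orderOf_mapRoot [IsDomain S] {f : S} {σ : S ≃ₐ[R] S} (hσ : σ f = f)
    (h : orderOf σ = 2) : orderOf (mapRoot σ hσ) = 2 := by
  refine orderOf_eq_prime (algEquiv_ext (fun s => ?_) (by simp [sq])) fun h1 => ?_
  · simp only [sq, AlgEquiv.mul_apply, mapRoot_of, AlgEquiv.one_apply]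
    rw [← AlgEquiv.mul_apply, ← sq, ← h, pow_orderOf_eq_one, AlgEquiv.one_apply]
  · have : σ = 1 := AlgEquiv.ext fun s => of_X_sq_sub_C_injective f <| by
      simpa [h1] using (mapRoot_of σ hσ s).symm
    simp [this] at h

lemma negRoot_mul_mapRoot_comm {f : S} (σ : S ≃ₐ[R] S) (hσ : σ f = f) :
    negRoot R f * mapRoot σ hσ = mapRoot σ hσ * negRoot R f :=
  algEquiv_ext (by simp) (by simp)

end AdjoinRoot

namespace RatFunc

variable (K : Type*) [Field K]

def algEquivOneSubX : RatFunc K ≃ₐ[K] RatFunc K :=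
  IsFractionRing.algEquivOfAlgEquiv <|
    algEquivOfCompEqX (1 - Polynomial.X) (1 - Polynomial.X) (by simp [sub_comp])
      (by simp [sub_comp])

variable {K}

@[simp]
lemma algEquivOneSubX_X : algEquivOneSubX K X = 1 - X := by
  rw [← algebraMap_X, algEquivOneSubX, IsFractionRing.algEquivOfAlgEquiv_algebraMap]
  simp

lemma orderOf_algEquivOneSubX : orderOf (algEquivOneSubX K) = 2 := by
  refine orderOf_eq_prime (AlgEquiv.ext fun s => ?_) fun h => ?_
  · -- `algEquivOneSubX K` is definitionally its own inverse.
    exact (algEquivOneSubX K).symm_apply_apply s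
  · have := algEquivOneSubX_X (K := K)
    rw [h, AlgEquiv.one_apply, ← algebraMap_X, ← map_one (algebraMap K[X] (RatFunc K)),
      ← map_sub] at this
    simpa using congrArg (Polynomial.eval 0) (IsFractionRing.injective K[X] (RatFunc K) this)

def genusTwoSextic : RatFunc K :=
  4 * X ^ 6 - 12 * X ^ 5 + 21 * X ^ 4 - 22 * X ^ 3 + 21 * X ^ 2 - 12 * X + 4

lemma algEquivOneSubX_genusTwoSextic : algEquivOneSubX K genusTwoSextic = genusTwoSextic := by
  simp only [genusTwoSextic, map_add, map_sub, map_mul, map_pow, map_ofNat, algEquivOneSubX_X]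
  ring

lemma genusTwoSextic_ne_zero (h2 : (2 : K) ≠ 0) : (genusTwoSextic : RatFunc K) ≠ 0 := by
  have h : genusTwoSextic = algebraMap K[X] (RatFunc K) (4 * Polynomial.X ^ 6
      - 12 * Polynomial.X ^ 5 + 21 * Polynomial.X ^ 4 - 22 * Polynomial.X ^ 3
      + 21 * Polynomial.X ^ 2 - 12 * Polynomial.X + 4) := by
    simp only [genusTwoSextic, map_add, map_sub, map_mul, map_pow, map_ofNat, algebraMap_X]
  rw [h, ne_eq, map_eq_zero_iff _ (IsFractionRing.injective _ _)]
  intro h0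
  have h4 : (4 : K) = 0 := by simpa using congrArg (Polynomial.eval 0) h0
  exact h2 (mul_self_eq_zero.mp (by linear_combination h4))

end RatFunc

end

theorem stmt_16_general (K : Type*) [Field K] (h2 : (2 : K) ≠ 0)
    (p : Polynomial (RatFunc K))
    (hp : p = X ^ 2 - C (4 * (RatFunc.X : RatFunc K) ^ 6 - 12 * RatFunc.X ^ 5
      + 21 * RatFunc.X ^ 4 - 22 * RatFunc.X ^ 3 + 21 * RatFunc.X ^ 2 - 12 * RatFunc.X + 4)) :
    ∃ ψ₁ ψ₂ : AdjoinRoot p ≃ₐ[K] AdjoinRoot p,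
      let u : AdjoinRoot p := AdjoinRoot.of p RatFunc.X
      let v : AdjoinRoot p := AdjoinRoot.root p
      let u₁ : AdjoinRoot p := -u ^ 2 + u
      let v₂ : AdjoinRoot p := v * (2 * u - 1)
      ψ₁ u = u ∧ ψ₁ v = -v ∧ ψ₂ u = -u + 1 ∧ ψ₂ v = v ∧
      ψ₁ * ψ₂ = ψ₂ * ψ₁ ∧ orderOf ψ₁ = 2 ∧ orderOf ψ₂ = 2 ∧
      ψ₂ u₁ = u₁ ∧ ψ₂ v = v ∧
      v ^ 2 = -4 * u₁ ^ 3 + 9 * u₁ ^ 2 - 12 * u₁ + 4 ∧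
      (ψ₁ * ψ₂) u₁ = u₁ ∧ (ψ₁ * ψ₂) v₂ = v₂ ∧
      v₂ ^ 2 = (-4 * u₁ ^ 3 + 9 * u₁ ^ 2 - 12 * u₁ + 4) * (-4 * u₁ + 1) := by
  change p = X ^ 2 - C RatFunc.genusTwoSextic at hp
  subst hp
  have h2' : (2 : RatFunc K) ≠ 0 := by
    rw [← map_ofNat (algebraMap K (RatFunc K))]
    exact (_root_.map_ne_zero _).mpr h2
  have hσf := RatFunc.algEquivOneSubX_genusTwoSextic (K := K)
  refine ⟨AdjoinRoot.negRoot K _, AdjoinRoot.mapRoot _ hσf, ?_⟩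
  intro u v u₁ v₂
  have hψ₁u : AdjoinRoot.negRoot K _ u = u := AdjoinRoot.negRoot_of _ _
  have hψ₁v : AdjoinRoot.negRoot K _ v = -v := AdjoinRoot.negRoot_root _
  have hψ₂v : AdjoinRoot.mapRoot _ hσf v = v := AdjoinRoot.mapRoot_root _ _
  have hψ₂u : AdjoinRoot.mapRoot _ hσf u = -u + 1 := by
    simp only [u, AdjoinRoot.mapRoot_of, RatFunc.algEquivOneSubX_X, map_sub, map_one]
    ring
  have hv : v ^ 2 = 4 * u ^ 6 - 12 * u ^ 5 + 21 * u ^ 4 - 22 * u ^ 3 + 21 * u ^ 2 - 12 * u + 4 := by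
    rw [show v ^ 2 = _ from AdjoinRoot.root_X_sq_sub_C_sq _,
      congrArg (AdjoinRoot.of _) RatFunc.genusTwoSextic.eq_def]
    simp only [u, map_add, map_sub, map_mul, map_pow, map_ofNat]
  refine ⟨hψ₁u, hψ₁v, hψ₂u, hψ₂v, AdjoinRoot.negRoot_mul_mapRoot_comm _ _,
    AdjoinRoot.orderOf_negRoot h2' (RatFunc.genusTwoSextic_ne_zero h2),
    AdjoinRoot.orderOf_mapRoot _ RatFunc.orderOf_algEquivOneSubX, ?_, hψ₂v,
    by linear_combination hv, ?_, ?_, by linear_combination (2 * u - 1) ^ 2 * hv⟩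
  all_goals
    simp only [u₁, v₂, AlgEquiv.mul_apply, map_add, map_neg, map_pow, map_mul, map_sub, map_one,
      map_ofNat, hψ₁u, hψ₁v, hψ₂u, hψ₂v]
    ring

/-- In the genus-2 hyperelliptic function field `K(u,v)` with
`v² = 4u⁶ - 12u⁵ + 21u⁴ - 22u³ + 21u² - 12u + 4` (realized as `AdjoinRoot p` over
`K(u) = RatFunc K`), the maps `ψ₁(u,v) = (u,-v)` and `ψ₂(u,v) = (-u+1, v)` are commuting
involutory automorphisms; `u₁ = -u² + u` and `v₁ = v` are fixed by `ψ₂` and satisfy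
`v₁² = -4u₁³ + 9u₁² - 12u₁ + 4`, while `u₂ = u₁` and `v₂ = v(2u-1)` are fixed by `ψ₁ψ₂`
and satisfy `v₂² = (-4u₂³ + 9u₂² - 12u₂ + 4)(-4u₂ + 1)`. -/
theorem stmt_16 (K : Type*) [Field K] [IsAlgClosed K] (h2 : (2 : K) ≠ 0)
    (p : Polynomial (RatFunc K))
    (hp : p = X ^ 2 - C (4 * (RatFunc.X : RatFunc K) ^ 6 - 12 * RatFunc.X ^ 5
      + 21 * RatFunc.X ^ 4 - 22 * RatFunc.X ^ 3 + 21 * RatFunc.X ^ 2 - 12 * RatFunc.X + 4))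
    [Fact (Irreducible p)] :
    ∃ ψ₁ ψ₂ : AdjoinRoot p ≃ₐ[K] AdjoinRoot p,
      let u : AdjoinRoot p := AdjoinRoot.of p RatFunc.X
      let v : AdjoinRoot p := AdjoinRoot.root p
      let u₁ : AdjoinRoot p := -u ^ 2 + u
      let v₂ : AdjoinRoot p := v * (2 * u - 1)
      ψ₁ u = u ∧ ψ₁ v = -v ∧ ψ₂ u = -u + 1 ∧ ψ₂ v = v ∧
      ψ₁ * ψ₂ = ψ₂ * ψ₁ ∧ orderOf ψ₁ = 2 ∧ orderOf ψ₂ = 2 ∧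
      ψ₂ u₁ = u₁ ∧ ψ₂ v = v ∧
      v ^ 2 = -4 * u₁ ^ 3 + 9 * u₁ ^ 2 - 12 * u₁ + 4 ∧
      (ψ₁ * ψ₂) u₁ = u₁ ∧ (ψ₁ * ψ₂) v₂ = v₂ ∧
      v₂ ^ 2 = (-4 * u₁ ^ 3 + 9 * u₁ ^ 2 - 12 * u₁ + 4) * (-4 * u₁ + 1) :=
  stmt_16_general K h2 p hp
end

section
/- Every group of order 216 that contains a subgroup isomorphic to (S₃ × S₃) ⋊ C₂ (with C₂ swapping the two S₃ factors) and contains no abelian subgroup of order 27 does not exist; equivalently, every group of order 216 containing a subgroup isomorphic to the semidirect product (S₃ × S₃) ⋊ C₂ of order 72 contains an abelian subgroup of order 27. -/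
/-- The symmetric group `S₃`. -/
abbrev S3 := Equiv.Perm (Fin 3)

/-- The coordinate-swapping automorphism of `S₃ × S₃`. -/
def swapAut : MulAut (S3 × S3) := (MulEquiv.prodComm : S3 × S3 ≃* S3 × S3)

lemma swapAut_sq : swapAut * swapAut = 1 := by
  ext x <;> rfl

/-- The action of `C₂` on `S₃ × S₃` swapping the two factors. -/
noncomputable def swapAction : Multiplicative (ZMod 2) →* MulAut (S3 × S3) :=
  AddMonoidHom.toMultiplicativeLeft
    (ZMod.lift 2 ⟨(zmultiplesHom _ : _ ≃ (ℤ →+ Additive (MulAut (S3 × S3))))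
        (Additive.ofMul swapAut), by
      have h : swapAut ^ (2 : ℤ) = 1 := by
        rw [zpow_two]; exact swapAut_sq
      exact congrArg Additive.ofMul h⟩)

/-- The group `(S₃ × S₃) ⋊ C₂` of order `72`, with `C₂` swapping the two `S₃` factors. -/
noncomputable abbrev W72 := SemidirectProduct (S3 × S3) (Multiplicative (ZMod 2)) swapAction

/-!
Let `Q ≅ C₃ × C₃` be the image of `A₃ × A₃` in the copy `H` of `W72`. Since `[G : H] = 3`, the
normalizer of `Q` contains `H` and a subgroup of order `27` in which `Q` has index `3`, so `Q`
is normal in `G`. Its centralizer `C` is normal and meets `H` exactly in `Q`, so `8` divides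
`[G : C]`, which divides `[G : Q] = 24`. If `[G : C] = 8`, then `C` has order `27` with the
subgroup `Q` of order `9` central, hence `C` is abelian. If `[G : C] = 24`, then `C = Q` and
`G/Q` embeds into `Aut Q ≅ GL(2, 3)` with index `2`. An index-two subgroup of `GL(2, 3)`
contains the `16` squares, so it lies in `SL(2, 3)`, whose only involution is `-1`. This
contradicts the two involutions of `H` lying in different nontrivial cosets of `Q`.
-/

lemma isMulCommutative_of_le_center_of_card_dvd {G : Type*} [Group G] [Finite G] {p : ℕ}
    [Fact p.Prime] {Z : Subgroup G} (hZ : Z ≤ Subgroup.center G)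
    (h : Nat.card G ∣ p * Nat.card Z) : IsMulCommutative G := by
  have hindex : Z.index ∣ p := by
    rw [← Z.card_mul_index, mul_comm] at h
    exact Nat.dvd_of_mul_dvd_mul_right Nat.card_pos h
  have : IsCyclic (G ⧸ Subgroup.center G) :=
    isCyclic_of_card_dvd_prime ((Subgroup.index_dvd_of_le hZ).trans hindex)
  exact isMulCommutative_of_isCyclic_quotient_center_self G

namespace Subgroup

variable {G : Type*} [Group G]

lemma le_normalizer_of_card_eq_prime_pow_succ {p n : ℕ} [hp : Fact p.Prime] {Q P : Subgroup G}
    (hQP : Q ≤ P) (hQ : Nat.card Q = p ^ n) (hP : Nat.card P = p ^ (n + 1)) :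
    P ≤ normalizer (Q : Set G) := by
  have hindex : (Q.subgroupOf P).index = p := by
    have h := (Q.subgroupOf P).card_mul_index
    rw [Nat.card_congr (subgroupOfEquivOfLe hQP).toEquiv, hQ, hP, pow_succ] at h
    exact Nat.eq_of_mul_eq_mul_left (pow_pos hp.out.pos n) h
  have : (Q.subgroupOf P).Normal :=
    normal_of_index_eq_minFac_card (by rw [hindex, hP, hp.out.pow_minFac n.succ_ne_zero])
  exact le_normalizer_of_normal_subgroupOf hQP

lemma eq_top_of_card_dvd_lcm [Finite G] {H P K : Subgroup G} (hH : H ≤ K) (hP : P ≤ K)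
    (h : Nat.card G ∣ (Nat.card H).lcm (Nat.card P)) : K = ⊤ :=
  eq_top_of_le_card _ <| Nat.le_of_dvd Nat.card_pos <|
    h.trans (Nat.lcm_dvd (card_dvd_of_le hH) (card_dvd_of_le hP))

lemma centralizer_map_inf_range {G' : Type*} [Group G'] {f : G →* G'} (hf : Function.Injective f)
    (K : Subgroup G) :
    centralizer (K.map f : Set G') ⊓ f.range = (centralizer (K : Set G)).map f := by
  ext x
  constructor
  · rintro ⟨hx, y, rfl⟩
    refine ⟨y, mem_centralizer_iff.mpr fun k hk => hf ?_, rfl⟩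
    simpa using mem_centralizer_iff.mp hx (f k) ⟨k, hk, rfl⟩
  · rintro ⟨y, hy, rfl⟩
    exact ⟨coe_map f K ▸ map_centralizer_le_centralizer_image _ f ⟨y, hy, rfl⟩, y, rfl⟩

lemma isMulCommutative_centralizer_of_card_dvd {p : ℕ} [Fact p.Prime] [Finite G]
    {Q : Subgroup G} (hQ : Q ≤ centralizer (Q : Set G))
    (h : Nat.card (centralizer (Q : Set G)) ∣ p * Nat.card Q) :
    IsMulCommutative (centralizer (Q : Set G)) := by
  refine isMulCommutative_of_le_center_of_card_dvd (p := p) (Z := Q.subgroupOf (centralizer Q))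
    (fun x hx => mem_center_iff.mpr fun g => Subtype.ext ?_) ?_
  · exact (mem_centralizer_iff.mp g.2 x hx).symm
  · rwa [Nat.card_congr (subgroupOfEquivOfLe hQ).toEquiv]

lemma two_mul_card_le_card [Finite G] [DecidableEq G] {K : Subgroup G} {S : Finset G}
    (hS : (S : Set G) ⊆ K) {g : G} (hg : g ∈ K) (hdisj : Disjoint S (S.image (g * ·))) :
    2 * S.card ≤ Nat.card K := by
  have hsub : ((S ∪ S.image (g * ·) : Finset G) : Set G) ⊆ K := by
    rw [Finset.coe_union, Finset.coe_image, Set.union_subset_iff, Set.image_subset_iff]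
    exact ⟨hS, fun s hs => mul_mem hg (hS hs)⟩
  have := Set.ncard_le_ncard hsub
  rwa [Set.ncard_coe_finset, Finset.card_union_of_disjoint hdisj,
    Finset.card_image_of_injective _ (mul_right_injective g), ← two_mul,
    ← Nat.card_coe_set_eq] at this

end Subgroup

namespace SemidirectProduct

variable {N K : Type*} [Group N] [Group K] {φ : K →* MulAut N}

theorem mem_map_inl {L : Subgroup N} {w : N ⋊[φ] K} :
    w ∈ L.map inl ↔ w.left ∈ L ∧ w.right = 1 := by
  constructor
  · rintro ⟨n, hn, rfl⟩
    exact ⟨hn, rfl⟩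
  · rintro ⟨hl, hr⟩
    exact ⟨w.left, hl, by ext <;> simp [hr]⟩

theorem mul_inl_mul_inv (w : N ⋊[φ] K) (n : N) :
    w * inl n * w⁻¹ = inl (w.left * φ w.right n * w.left⁻¹) := by
  rw [map_mul, map_mul, inl_aut, map_inv, map_inv]
  conv_lhs => rw [← inl_left_mul_inr_right w]
  group

theorem normal_map_inl {L : Subgroup N} [L.Normal] (hL : ∀ g, ∀ n ∈ L, φ g n ∈ L) :
    (L.map inl : Subgroup (N ⋊[φ] K)).Normal where
  conj_mem := by
    rintro _ ⟨n, hn, rfl⟩ w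
    rw [mul_inl_mul_inv]
    exact Subgroup.mem_map_of_mem _ (‹L.Normal›.conj_mem _ (hL _ n hn) _)

end SemidirectProduct

def MulAut.multiplicativeEquivZModLinearEquiv (n : ℕ) (M : Type*) [AddCommGroup M]
    [Module (ZMod n) M] : MulAut (Multiplicative M) ≃* (M ≃ₗ[ZMod n] M) where
  toFun e := (AddEquiv.toMultiplicative.symm e).toLinearEquiv (ZMod.map_smul _)
  invFun e := AddEquiv.toMultiplicative e.toAddEquiv
  left_inv _ := rfl
  right_inv _ := rfl
  map_mul' _ _ := rfl

noncomputable def MulAut.multiplicativeEquivGL (ι : Type*) [Fintype ι] [DecidableEq ι]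
    (n : ℕ) : MulAut (Multiplicative (ι → ZMod n)) ≃* GL ι (ZMod n) :=
  (multiplicativeEquivZModLinearEquiv n _).trans <|
    (LinearMap.GeneralLinearGroup.generalLinearEquiv _ _).symm.trans
      Matrix.GeneralLinearGroup.toLin.symm

lemma MulAut.ker_conjNormal {G : Type*} [Group G] (H : Subgroup G) [H.Normal] :
    (MulAut.conjNormal : G →* MulAut H).ker = Subgroup.centralizer (H : Set G) := by
  ext g
  simp only [MonoidHom.mem_ker, MulEquiv.ext_iff, Subtype.ext_iff, MulAut.conjNormal_apply,
    MulAut.one_apply, Subgroup.mem_centralizer_iff, Subtype.forall, SetLike.mem_coe]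
  exact forall₂_congr fun a _ => by rw [mul_inv_eq_iff_eq_mul, eq_comm]

namespace Matrix.GeneralLinearGroup

lemma card_fin_two_zmod_three : Nat.card (GL (Fin 2) (ZMod 3)) = 48 := by
  rw [card_GL_field]
  rfl

lemma card_image_mul_self_fin_two_zmod_three :
    (Finset.univ.image fun g : GL (Fin 2) (ZMod 3) => g * g).card = 16 := by
  have hunits : Finset.univ.image (Units.val : GL (Fin 2) (ZMod 3) → _) =
      Finset.univ.filter fun m => m.det ≠ 0 := by
    ext m
    rw [Finset.mem_image, Finset.mem_filter, ← isUnit_iff_ne_zero, ← isUnit_iff_isUnit_det]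
    simp [IsUnit]
  have hsq : (Finset.univ.image fun g : GL (Fin 2) (ZMod 3) => g * g).image Units.val =
      (Finset.univ.filter fun m : Matrix (Fin 2) (Fin 2) (ZMod 3) => m.det ≠ 0).image
        fun m => m * m := by
    rw [← hunits, Finset.image_image, Finset.image_image]
    rfl
  rw [← Finset.card_image_of_injective _ Units.val_injective, hsq]
  decide

lemma det_eq_one_of_mem_of_index_eq_two {K : Subgroup (GL (Fin 2) (ZMod 3))} (hK : K.index = 2)
    {g : GL (Fin 2) (ZMod 3)} (hg : g ∈ K) : det g = 1 := by
  by_contra hdet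
  have hdet' : det g = -1 :=
    (show ∀ u : (ZMod 3)ˣ, u = 1 ∨ u = -1 by decide) _ |>.resolve_left hdet
  have hsq : ∀ u : (ZMod 3)ˣ, u * u = 1 := by decide
  have hcard : Nat.card K = 24 := by
    have := K.card_mul_index
    rw [hK, card_fin_two_zmod_three] at this
    omega
  have := Subgroup.two_mul_card_le_card (S := Finset.univ.image fun x => x * x) ?_ hg ?_
  · rw [card_image_mul_self_fin_two_zmod_three, hcard] at this
    norm_num at this
  · rw [Finset.coe_image, Finset.coe_univ, Set.image_univ, Set.range_subset_iff]
    exact fun x => by simpa [sq] using Subgroup.sq_mem_of_index_two hK x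
  · simp only [Finset.disjoint_left, Finset.mem_image, Finset.mem_univ, true_and]
    rintro _ ⟨y, rfl⟩ ⟨_, ⟨x, rfl⟩, h⟩
    have := congrArg det h
    rw [map_mul, map_mul, map_mul, hsq, hsq, hdet'] at this
    exact absurd this (by decide)

lemma eq_neg_one_of_mem_of_index_eq_two {K : Subgroup (GL (Fin 2) (ZMod 3))} (hK : K.index = 2)
    {g : GL (Fin 2) (ZMod 3)} (hg : g ∈ K) (hg2 : g * g = 1) (hg1 : g ≠ 1) : g = -1 := by
  have key : ∀ m : Matrix (Fin 2) (Fin 2) (ZMod 3),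
      m * m = 1 → m.det = 1 → m = 1 ∨ m = -1 := by
    decide
  rcases key g (congrArg Units.val hg2)
      (congrArg Units.val (det_eq_one_of_mem_of_index_eq_two hK hg)) with h | h
  · exact absurd (Units.ext h) hg1
  · exact Units.ext h

end Matrix.GeneralLinearGroup

open Subgroup Matrix.GeneralLinearGroup in
/-- `G/Q` embeds into `Aut Q ≅ GL(2, 3)` as a subgroup of index `2`, where every nontrivial
involution is `-1`. -/
theorem mul_inv_mem_of_mul_self_eq_one {G : Type*} [Group G] {Q : Subgroup G} [Q.Normal]
    (ψ : Q ≃* Multiplicative (Fin 2 → ZMod 3)) (hQ : centralizer (Q : Set G) = Q)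
    (hindex : Q.index = 24) {s t : G} (hs : s * s = 1) (ht : t * t = 1) (hsQ : s ∉ Q)
    (htQ : t ∉ Q) : s * t⁻¹ ∈ Q := by
  let φ : MulAut Q ≃* GL (Fin 2) (ZMod 3) :=
    (MulAut.congr ψ).trans (MulAut.multiplicativeEquivGL _ 3)
  let ρ : G →* GL (Fin 2) (ZMod 3) := φ.toMonoidHom.comp MulAut.conjNormal
  have hker : ρ.ker = Q := by
    rw [← hQ, ← MulAut.ker_conjNormal]
    exact MonoidHom.ker_mulEquiv_comp _ φ
  have hrange : ρ.range.index = 2 := by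
    have h := ρ.range.card_mul_index
    rw [← index_ker, hker, hindex, card_fin_two_zmod_three] at h
    omega
  have hneg (g : G) (hg : g * g = 1) (hgQ : g ∉ Q) : ρ g = -1 :=
    eq_neg_one_of_mem_of_index_eq_two hrange ⟨g, rfl⟩ (by rw [← map_mul, hg, map_one])
      fun h => hgQ (hker ▸ h)
  rw [← hker, MonoidHom.mem_ker, map_mul, map_inv, hneg s hs hsQ, hneg t ht htQ,
    mul_inv_cancel]

namespace W72

open SemidirectProduct Subgroup Equiv.Perm

noncomputable abbrev altProd : Subgroup W72 :=
  ((alternatingGroup (Fin 3)).prod (alternatingGroup (Fin 3))).map inl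

lemma card : Nat.card W72 = 72 := by
  rw [SemidirectProduct.card, Nat.card_prod, Nat.card_perm, Nat.card_fin,
    Nat.card_eq_fintype_card]
  rfl

noncomputable def altProdEquiv : altProd ≃* Multiplicative (Fin 2 → ZMod 3) :=
  let e : alternatingGroup (Fin 3) ≃* Multiplicative (ZMod 3) :=
    mulEquivOfPrimeCardEq (p := 3) (by rw [nat_card_alternatingGroup, Nat.card_fin]; rfl)
      (by simp)
  (equivMapOfInjective _ _ inl_injective).symm.trans <| (prodEquiv _ _).trans <|
    (e.prodCongr e).trans <| (MulEquiv.prodMultiplicative _ _).symm.trans <|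
      AddEquiv.toMultiplicative (LinearEquiv.finTwoArrow (ZMod 3) (ZMod 3)).toAddEquiv.symm

lemma card_altProd : Nat.card altProd = 3 ^ 2 := by
  rw [Nat.card_congr altProdEquiv.toEquiv]
  simp

lemma swapAction_apply_eq (g : Multiplicative (ZMod 2)) (x : S3 × S3) :
    swapAction g x = x ∨ swapAction g x = x.swap := by
  revert g x
  decide

instance altProd_normal : altProd.Normal :=
  normal_map_inl fun g n hn => by
    rcases swapAction_apply_eq g n with h | h <;> rw [h]
    exacts [hn, ⟨hn.2, hn.1⟩]

lemma finRotate_mem : finRotate 3 ∈ alternatingGroup (Fin 3) :=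
  mem_alternatingGroup.mpr (by decide)

lemma mem_of_conj_finRotate_eq : ∀ x : S3, x * finRotate 3 * x⁻¹ = finRotate 3 →
    x ∈ alternatingGroup (Fin 3) := by
  simp only [mem_alternatingGroup]
  decide

lemma eq_one_of_conj_eq : ∀ l : S3 × S3, ∀ r : Multiplicative (ZMod 2),
    l * swapAction r (finRotate 3, 1) * l⁻¹ = (finRotate 3, 1) → r = 1 := by
  decide

lemma centralizer_altProd : centralizer (altProd : Set W72) = altProd := by
  refine le_antisymm (fun w hw => ?_) <| le_centralizer_iff_isMulCommutative.mpr <|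
    IsPGroup.isMulCommutative_of_card_eq_prime_sq card_altProd
  have key : ∀ m ∈ (alternatingGroup (Fin 3)).prod (alternatingGroup (Fin 3)),
      w.left * swapAction w.right m * w.left⁻¹ = m := fun m hm => by
    rw [← inl_inj (φ := swapAction), ← mul_inl_mul_inv,
      (mem_centralizer_iff.mp hw _ ⟨m, hm, rfl⟩).symm, mul_inv_cancel_right]
  have h1 := key (finRotate 3, 1) (mem_prod.mpr ⟨finRotate_mem, one_mem _⟩)
  have h2 := key (1, finRotate 3) (mem_prod.mpr ⟨one_mem _, finRotate_mem⟩)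
  have hr := eq_one_of_conj_eq _ _ h1
  rw [hr, map_one, MulAut.one_apply] at h1 h2
  exact mem_map_inl.mpr ⟨⟨mem_of_conj_finRotate_eq _ (congrArg Prod.fst h1),
    mem_of_conj_finRotate_eq _ (congrArg Prod.snd h2)⟩, hr⟩

lemma exists_involutions_not_mem_altProd : ∃ s t : W72, s * s = 1 ∧ t * t = 1 ∧
    s ∉ altProd ∧ t ∉ altProd ∧ s * t⁻¹ ∉ altProd := by
  refine ⟨inr (Multiplicative.ofAdd 1), inl (Equiv.swap 0 1, Equiv.swap 0 1), ?_, ?_, ?_, ?_, ?_⟩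
  · apply SemidirectProduct.ext <;> decide
  · apply SemidirectProduct.ext <;> decide
  all_goals simp only [mem_map_inl, mem_prod, mem_alternatingGroup]; decide

lemma centralizer_map_ne {G : Type*} [Group G] (hG : Nat.card G = 216) {f : W72 →* G}
    (hf : Function.Injective f) [(altProd.map f).Normal] :
    centralizer (altProd.map f : Set G) ≠ altProd.map f := by
  intro hC
  have hindex : (altProd.map f).index = 24 := by
    have := (altProd.map f).card_mul_index
    rw [card_map_of_injective hf, card_altProd, hG] at this
    omega
  obtain ⟨s, t, hs, ht, hsQ, htQ, hstQ⟩ := exists_involutions_not_mem_altProd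
  have hst := mul_inv_mem_of_mul_self_eq_one
    ((equivMapOfInjective _ f hf).symm.trans altProdEquiv) hC hindex
    (by rw [← map_mul, hs, map_one]) (by rw [← map_mul, ht, map_one])
    ((mem_map_iff_mem hf).not.mpr hsQ) ((mem_map_iff_mem hf).not.mpr htQ)
  rw [← map_inv, ← map_mul, mem_map_iff_mem hf] at hst
  exact hstQ hst

end W72

namespace Subgroup

variable {G : Type*} [Group G] [Finite G]

lemma normal_of_card_eq (hG : Nat.card G = 216) {Q H : Subgroup G} (hQ : Nat.card Q = 3 ^ 2)
    (hH : Nat.card H = 72) (hHQ : H ≤ normalizer (Q : Set G)) : Q.Normal := by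
  obtain ⟨P, hP, hQP⟩ := Sylow.exists_subgroup_card_pow_succ (by rw [hG]; norm_num) hQ
  refine normalizer_eq_top_iff.mp <|
    eq_top_of_card_dvd_lcm hHQ (le_normalizer_of_card_eq_prime_pow_succ hQP hQ hP) ?_
  rw [hG, hH, hP]
  norm_num

lemma eq_or_card_eq_of_inf_eq (hG : Nat.card G = 216) {Q R N : Subgroup G} [N.Normal]
    (hQ : Nat.card Q = 3 ^ 2) (hR : Nat.card R = 72) (hQN : Q ≤ N) (hNR : N ⊓ R = Q) :
    N = Q ∨ Nat.card N = 27 := by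
  have hindex (K : Subgroup G) : Nat.card K * K.index = 216 := hG ▸ K.card_mul_index
  have hQi : Q.index = 24 := by
    have := hindex Q
    rw [hQ] at this
    omega
  have hRi : R.index = 3 := by
    have := hindex R
    rw [hR] at this
    omega
  have hQR := relIndex_mul_index (show Q ≤ R from hNR ▸ inf_le_right)
  have h8 : Q.relIndex R ∣ N.index :=
    hNR ▸ inf_relIndex_right N R ▸ relIndex_dvd_index_of_normal N R
  rw [show Q.relIndex R = 8 by rw [hQi, hRi] at hQR; omega] at h8
  have h24 : N.index ∣ 24 := hQi ▸ index_dvd_of_le hQN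
  obtain ⟨k, hk⟩ := h8
  have hN := hindex N
  rw [hk] at h24 hN
  rcases (Nat.dvd_prime Nat.prime_three).mp
    (Nat.dvd_of_mul_dvd_mul_left (by norm_num) (h24 : 8 * k ∣ 8 * 3)) with rfl | rfl
  · right
    omega
  · left
    exact (eq_of_le_of_card_ge hQN (by rw [hQ]; omega)).symm

end Subgroup

/-- Every group of order `216` containing a subgroup isomorphic to the
semidirect product `(S₃ × S₃) ⋊ C₂` of order `72` contains an abelian subgroup of
order `27`. -/
theorem stmt_18 (G : Type*) [Group G] [Fintype G] (hG : Fintype.card G = 216)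
    (H : Subgroup G) (hH : Nonempty (H ≃* W72)) :
    ∃ A : Subgroup G, Nat.card A = 27 ∧ ∀ x ∈ A, ∀ y ∈ A, x * y = y * x := by
  obtain ⟨e⟩ := hH
  let f : W72 →* G := H.subtype.comp e.symm.toMonoidHom
  have hf : Function.Injective f := H.subtype_injective.comp e.symm.injective
  have hG' : Nat.card G = 216 := Nat.card_eq_fintype_card.trans hG
  set Q := W72.altProd.map f
  have hQ : Nat.card Q = 3 ^ 2 := (Subgroup.card_map_of_injective hf).trans W72.card_altProd
  have hR : Nat.card f.range = 72 := by
    rw [f.range_eq_map, Subgroup.card_map_of_injective hf, Subgroup.card_top, W72.card]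
  have : Q.Normal := Subgroup.normal_of_card_eq hG' hQ hR <| by
    rw [f.range_eq_map, ← Subgroup.normalizer_eq_top_iff.mpr W72.altProd_normal]
    exact Subgroup.le_normalizer_map f
  have hQC : Q ≤ Subgroup.centralizer Q := Subgroup.le_centralizer_iff_isMulCommutative.mpr <|
    IsPGroup.isMulCommutative_of_card_eq_prime_sq hQ
  have hCR : Subgroup.centralizer Q ⊓ f.range = Q := by
    rw [Subgroup.centralizer_map_inf_range hf, W72.centralizer_altProd]
  obtain hCQ | hC := Subgroup.eq_or_card_eq_of_inf_eq hG' hQ hR hQC hCR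
  · exact absurd hCQ (W72.centralizer_map_ne hG' hf)
  have hcomm := Subgroup.isMulCommutative_centralizer_of_card_dvd (p := 3) hQC
    (by rw [hC, hQ]; norm_num)
  exact ⟨_, hC, fun x hx y hy => Subgroup.mem_centralizer_iff.mp
    (Subgroup.le_centralizer_iff_isMulCommutative.mpr hcomm hy) x hx⟩
end
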